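/- Let f : ℝ^(n+m) → ℝ and g_j : ℝ^(n+m) → ℝ (j = 1, …, l) be convex and differentiable, and fix finitely many linearization points (x¹,y¹), …, (xᵏ,yᵏ) ∈ ℝ^(n+m). If the OA master problem is infeasible — that is, there is no (x, y, μ) with x ∈ [x̲, x̄], y ∈ [y̲, ȳ] integer, μ ∈ ℝ satisfying all OA cuts f(xⁱ,yⁱ) + ⟪∇f(xⁱ,yⁱ), (x,y) − (xⁱ,yⁱ)⟫ ≤ μ and g_j(xⁱ,yⁱ) + ⟪∇g_j(xⁱ,yⁱ), (x,y) − (xⁱ,yⁱ)⟫ ≤ 0 — then the MINLP itself is infeasible: there is no (x,y) with x ∈ [x̲, x̄], y ∈ [y̲, ȳ] integer, and g_j(x,y) ≤ 0 for all j. -/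

import Mathlib

/-!
A differentiable convex function lies above each of its tangent planes (restrict it to the line
through the two points and use the slope inequality in one variable). Hence the linearizations
of `g j` are nonpositive wherever `g j` is, and those of `f` are bounded by `μ = f p`: a feasible
point `p` of the MINLP gives the feasible point `(p, f p)` of the master problem.
-/

open scoped RealInnerProductSpace

theorem ConvexOn.apply_add_fderiv_sub_le {E : Type*} [NormedAddCommGroup E] [NormedSpace ℝ E]
    {s : Set E} {f : E → ℝ} {f' : E →L[ℝ] ℝ} {p q : E} (hf : ConvexOn ℝ s f)
    (hq : q ∈ s) (hp : p ∈ s) (hf' : HasFDerivAt f f' q) :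
    f q + f' (p - q) ≤ f p := by
  set L : ℝ →ᵃ[ℝ] E := AffineMap.lineMap q p
  have hderiv : HasDerivAt (f ∘ L) (f' (p - q)) 0 :=
    HasFDerivAt.comp_hasDerivAt (0 : ℝ) (by simpa [L] using hf') AffineMap.hasDerivAt_lineMap
  have hslope := (hf.comp_affineMap L).le_slope_of_hasDerivAt (by simpa [L] using hq)
    (by simpa [L] using hp) one_pos hderiv
  simp only [slope, Function.comp_apply, L, AffineMap.lineMap_apply_zero,
    AffineMap.lineMap_apply_one, sub_zero, inv_one, one_smul, vsub_eq_sub] at hslope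
  linarith

theorem ConvexOn.apply_add_inner_gradient_sub_le {E : Type*} [NormedAddCommGroup E]
    [InnerProductSpace ℝ E] [CompleteSpace E] {s : Set E} {f : E → ℝ} {p q : E}
    (hf : ConvexOn ℝ s f) (hq : q ∈ s) (hp : p ∈ s) (hdiff : DifferentiableAt ℝ f q) :
    f q + ⟪gradient f q, p - q⟫ ≤ f p := by
  rw [inner_gradient_left]
  exact hf.apply_add_fderiv_sub_le hq hp hdiff.hasFDerivAt

theorem oa_master_infeasible_implies_minlp_infeasible_general {n m l k : ℕ}
    (f : EuclideanSpace ℝ (Fin (n + m)) → ℝ)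
    (g : Fin l → EuclideanSpace ℝ (Fin (n + m)) → ℝ)
    (hfconv : ConvexOn ℝ Set.univ f)
    (hfdiff : Differentiable ℝ f)
    (hgconv : ∀ j, ConvexOn ℝ Set.univ (g j))
    (hgdiff : ∀ j, Differentiable ℝ (g j))
    (pts : Fin k → EuclideanSpace ℝ (Fin (n + m)))
    (B : Set (EuclideanSpace ℝ (Fin (n + m))))
    (hinfeas : ¬ ∃ (p : EuclideanSpace ℝ (Fin (n + m))) (μ : ℝ), p ∈ B ∧
        (∀ i, f (pts i) + ⟪gradient f (pts i), p - pts i⟫ ≤ μ) ∧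
        (∀ i j, g j (pts i) + ⟪gradient (g j) (pts i), p - pts i⟫ ≤ 0)) :
    ¬ ∃ p : EuclideanSpace ℝ (Fin (n + m)), p ∈ B ∧ ∀ j, g j p ≤ 0 := by
  rintro ⟨p, hpB, hgp⟩
  refine hinfeas ⟨p, f p, hpB, fun i => ?_, fun i j => ?_⟩
  · exact hfconv.apply_add_inner_gradient_sub_le trivial trivial (hfdiff _)
  · exact ((hgconv j).apply_add_inner_gradient_sub_le trivial trivial (hgdiff j _)).trans (hgp j)

/-- If the OA master problem (variable bounds, integrality, and the
outer-approximation cuts of the convex differentiable functions `f`, `g j` at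
finitely many linearization points) is infeasible, then the MINLP itself is
infeasible. A point `p : ℝ^(n+m)` encodes `(x, y)`: its first `n` coordinates
(indices `Fin.castAdd m i`) are `x`, its last `m` coordinates (indices
`Fin.natAdd n i`) are `y`. -/
theorem oa_master_infeasible_implies_minlp_infeasible {n m l k : ℕ}
    (f : EuclideanSpace ℝ (Fin (n + m)) → ℝ)
    (g : Fin l → EuclideanSpace ℝ (Fin (n + m)) → ℝ)
    (hfconv : ConvexOn ℝ Set.univ f)
    (hfdiff : Differentiable ℝ f)
    (hgconv : ∀ j, ConvexOn ℝ Set.univ (g j))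
    (hgdiff : ∀ j, Differentiable ℝ (g j))
    (xlo xhi : Fin n → ℝ) (ylo yhi : Fin m → ℝ)
    (pts : Fin k → EuclideanSpace ℝ (Fin (n + m)))
    (B : Set (EuclideanSpace ℝ (Fin (n + m))))
    (hB : B = {p | (∀ i : Fin n, xlo i ≤ p (Fin.castAdd m i) ∧ p (Fin.castAdd m i) ≤ xhi i) ∧
        (∀ i : Fin m, ylo i ≤ p (Fin.natAdd n i) ∧ p (Fin.natAdd n i) ≤ yhi i ∧
          ∃ z : ℤ, p (Fin.natAdd n i) = (z : ℝ))})
    (hinfeas : ¬ ∃ (p : EuclideanSpace ℝ (Fin (n + m))) (μ : ℝ), p ∈ B ∧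
        (∀ i, f (pts i) + ⟪gradient f (pts i), p - pts i⟫ ≤ μ) ∧
        (∀ i j, g j (pts i) + ⟪gradient (g j) (pts i), p - pts i⟫ ≤ 0)) :
    ¬ ∃ p : EuclideanSpace ℝ (Fin (n + m)), p ∈ B ∧ ∀ j, g j p ≤ 0 :=
  oa_master_infeasible_implies_minlp_infeasible_general f g hfconv hfdiff hgconv hgdiff pts B
    hinfeas
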